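/- arXiv:math/0210394 — 2 statements merged into one kernel-verified Lean document; each statement's English description precedes it below -/
import Mathlib

section
/- Let G ∈ MvPolynomial (Fin 5) ℂ be homogeneous of degree 5 and non-transversal exactly along n isolated rays: there exist nonzero points s♯₁, …, s♯ₙ ∈ ℂ⁵ such that {s : ∀ i, ∂ᵢG(s) = 0} = ⋃ⱼ {λ·s♯ⱼ : λ ∈ ℂ}. Then {(p,s) ∈ ℂ × ℂ⁵ : (p,s) ≠ (0,0), G(s) = 0 and ∀ i, p·∂ᵢG(s) = 0} = ({0} × {s ≠ 0 : G(s) = 0}) ∪ ⋃ⱼ {(p, λ·s♯ⱼ) : (p,λ) ∈ (ℂ × ℂ) \ {(0,0)}}. (The first branch is the punctured cone over the conifold M♯, the second branch is the union of the antenna cones over the nodes.) -/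
open MvPolynomial Finset in
lemma euler_aux (G : MvPolynomial (Fin 5) ℂ) (hG : G.IsHomogeneous 5) (s : Fin 5 → ℂ) :
    (5 : ℂ) * MvPolynomial.eval s G
      = ∑ i : Fin 5, s i * MvPolynomial.eval s (MvPolynomial.pderiv i G) := by
  conv_lhs => rw [G.as_sum]
  conv_rhs => rw [G.as_sum]
  simp only [map_sum, Finset.mul_sum]
  rw [Finset.sum_comm]
  refine Finset.sum_congr rfl fun u hu => ?_
  have hdeg : ∑ i : Fin 5, (u i : ℂ) = 5 := by
    have h1 := hG (MvPolynomial.mem_support_iff.mp hu)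
    have h2 : ∑ i : Fin 5, u i = 5 := by
      simpa [Finsupp.weight_apply, Finsupp.sum_fintype, smul_eq_mul] using h1
    exact_mod_cast congrArg (Nat.cast : ℕ → ℂ) h2
  simp only [pderiv_monomial, eval_monomial]
  have key : ∀ i : Fin 5, s i * ((MvPolynomial.coeff u G * u i) *
      (u - Finsupp.single i 1).prod fun j e => s j ^ e)
      = (u i : ℂ) * (MvPolynomial.coeff u G * u.prod fun j e => s j ^ e) := by
    intro i
    rcases Nat.eq_zero_or_pos (u i) with h | h
    · simp [h]
    · rw [Finsupp.prod_pow, Finsupp.prod_pow]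
      simp only [Finsupp.tsub_apply, Finsupp.single_apply]
      rw [← Finset.prod_erase_mul _ _ (Finset.mem_univ i),
        ← Finset.prod_erase_mul _ _ (Finset.mem_univ i)]
      have hP : ∀ j ∈ Finset.univ.erase i,
          s j ^ (u j - if i = j then 1 else 0) = s j ^ u j := by
        intro j hj
        simp [Ne.symm (Finset.ne_of_mem_erase hj)]
      rw [Finset.prod_congr rfl hP, if_pos rfl]
      rw [← Nat.succ_pred_eq_of_pos h, pow_succ]
      push_cast [Nat.succ_pred_eq_of_pos h]
      rw [Nat.pred_eq_sub_one]
      ring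
  simp only [key, ← Finset.sum_mul, hdeg]

/-- For `G` homogeneous of degree 5 whose non-transversality locus is
exactly the union of `n` rays through nonzero points `s♯ⱼ`, the punctured critical set
of `W (p,s) = p * G s` is the union of the punctured cone over the conifold and the
antenna cones over the nodes. -/
theorem nontransversal_critical_set_decomposition
    (G : MvPolynomial (Fin 5) ℂ) (hG : G.IsHomogeneous 5)
    (n : ℕ) (sharp : Fin n → (Fin 5 → ℂ)) (hne : ∀ j, sharp j ≠ 0)
    (hloc : {s : Fin 5 → ℂ |
        ∀ i : Fin 5, MvPolynomial.eval s (MvPolynomial.pderiv i G) = 0} =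
      ⋃ j : Fin n, {s : Fin 5 → ℂ | ∃ l : ℂ, s = fun i => l * sharp j i}) :
    {ps : ℂ × (Fin 5 → ℂ) | ps ≠ (0, 0) ∧
        MvPolynomial.eval ps.2 G = 0 ∧
        ∀ i : Fin 5, ps.1 * MvPolynomial.eval ps.2 (MvPolynomial.pderiv i G) = 0} =
      ({0} : Set ℂ) ×ˢ {s : Fin 5 → ℂ | s ≠ 0 ∧ MvPolynomial.eval s G = 0} ∪
      ⋃ j : Fin n, {ps : ℂ × (Fin 5 → ℂ) |
        ∃ p l : ℂ, (p, l) ≠ (0, 0) ∧ ps = (p, fun i => l * sharp j i)} := by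
  have hzero : ∀ s : Fin 5 → ℂ,
      (∀ i : Fin 5, MvPolynomial.eval s (MvPolynomial.pderiv i G) = 0) →
      MvPolynomial.eval s G = 0 := by
    intro s hs
    have h5 := euler_aux G hG s
    simp only [hs, mul_zero, Finset.sum_const_zero] at h5
    have : (5 : ℂ) ≠ 0 := by norm_num
    exact (mul_eq_zero.mp h5).resolve_left this
  ext ⟨p, s⟩
  simp only [Set.mem_setOf_eq, Set.mem_union, Set.mem_prod, Set.mem_singleton_iff,
    Set.mem_iUnion]
  constructor
  · rintro ⟨hps, hGs, hcrit⟩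
    by_cases hp : p = 0
    · left
      refine ⟨hp, fun hs0 => hps ?_, hGs⟩
      simp [Prod.ext_iff, hp, hs0]
    · right
      have hs : ∀ i, MvPolynomial.eval s (MvPolynomial.pderiv i G) = 0 := by
        intro i
        exact (mul_eq_zero.mp (hcrit i)).resolve_left hp
      have hmem : s ∈ ⋃ j : Fin n,
          {s : Fin 5 → ℂ | ∃ l : ℂ, s = fun i => l * sharp j i} := by
        rw [← hloc]; exact hs
      obtain ⟨j, l, hsl⟩ := Set.mem_iUnion.mp hmem
      exact ⟨j, p, l, fun h => hp (congrArg Prod.fst h), by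
        simp [Prod.ext_iff, hsl]⟩
  · rintro (⟨hp, hs0, hGs⟩ | ⟨j, p', l, hpl, hps⟩)
    · refine ⟨fun h => hs0 (congrArg Prod.snd h), hGs, fun i => by simp [hp]⟩
    · obtain ⟨hp1, hp2⟩ := Prod.mk.injEq .. ▸ hps
      have hderiv : ∀ i, MvPolynomial.eval s (MvPolynomial.pderiv i G) = 0 := by
        have : s ∈ {s : Fin 5 → ℂ |
            ∀ i : Fin 5, MvPolynomial.eval s (MvPolynomial.pderiv i G) = 0} := by
          rw [hloc]
          exact Set.mem_iUnion.mpr ⟨j, l, hp2⟩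
        exact this
      refine ⟨?_, hzero s hderiv, fun i => by simp [hderiv i]⟩
      intro h
      have hps0 : p = 0 := congrArg Prod.fst h
      have hss0 : s = 0 := congrArg Prod.snd h
      have hl : l ≠ 0 := by
        rintro rfl
        exact hpl (by simp [Prod.ext_iff, ← hp1, hps0])
      apply hne j
      funext i
      have := congrFun hss0 i
      rw [hp2] at this
      simpa [hl] using this
end

section
/- Let G ∈ MvPolynomial (Fin 5) ℂ be homogeneous of degree 5 and let r < 0 be real. Then {(p,s) ∈ ℂ × ℂ⁵ : G(s) = 0, (∀ i, p·∂ᵢG(s) = 0), and ‖s‖² − 5|p|² = r} = {(p,s) : (∀ i, ∂ᵢG(s) = 0) and 5|p|² = ‖s‖² − r}, and every point (p,s) of this set satisfies |p|² ≥ −r/5 > 0 (in particular p ≠ 0, so the geometric branch p = 0 is empty). -/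
/-!
By Euler's identity `∑ sᵢ ∂ᵢG = 5 G`, a vanishing gradient already forces `G(s) = 0`.
On the sheet `r < 0` the level set gives `5|p|² = ‖s‖² − r ≥ −r > 0`, so `p ≠ 0` and `p · ∂ᵢG(s) = 0` forces `∂ᵢG(s) = 0`.
-/

open MvPolynomial

theorem MvPolynomial.IsHomogeneous.eval_eq_zero_of_forall_eval_pderiv_eq_zero
    {σ R : Type*} [Fintype σ] [CommSemiring R] [IsAddTorsionFree R]
    {φ : MvPolynomial σ R} {n : ℕ} (hφ : φ.IsHomogeneous n) (hn : n ≠ 0) {s : σ → R}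
    (hs : ∀ i, eval s (pderiv i φ) = 0) : eval s φ = 0 := by
  have euler := congrArg (eval s) hφ.sum_X_mul_pderiv
  simp only [map_sum, map_mul, hs, mul_zero, Finset.sum_const_zero, map_nsmul] at euler
  exact (smul_eq_zero.mp euler.symm).resolve_left hn

/-- For `G` homogeneous of degree 5 and `r < 0`, the critical set of
`W (p,s) = p * G s` intersected with the moment map level set `‖s‖² − 5|p|² = r` is
contained in the antenna branch, and every point satisfies `|p|² ≥ −r/5 > 0`
(so the geometric branch `p = 0` is empty). -/
theorem negative_sheet_decomposition
    (G : MvPolynomial (Fin 5) ℂ) (hG : G.IsHomogeneous 5)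
    (r : ℝ) (hr : r < 0) :
    ({ps : ℂ × (Fin 5 → ℂ) |
        MvPolynomial.eval ps.2 G = 0 ∧
        (∀ i : Fin 5, ps.1 * MvPolynomial.eval ps.2 (MvPolynomial.pderiv i G) = 0) ∧
        (∑ i, ‖ps.2 i‖ ^ 2) - 5 * ‖ps.1‖ ^ 2 = r} =
      {ps : ℂ × (Fin 5 → ℂ) |
        (∀ i : Fin 5, MvPolynomial.eval ps.2 (MvPolynomial.pderiv i G) = 0) ∧
        5 * ‖ps.1‖ ^ 2 = (∑ i, ‖ps.2 i‖ ^ 2) - r}) ∧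
    ∀ ps : ℂ × (Fin 5 → ℂ),
      (MvPolynomial.eval ps.2 G = 0 ∧
        (∀ i : Fin 5, ps.1 * MvPolynomial.eval ps.2 (MvPolynomial.pderiv i G) = 0) ∧
        (∑ i, ‖ps.2 i‖ ^ 2) - 5 * ‖ps.1‖ ^ 2 = r) →
      -r / 5 ≤ ‖ps.1‖ ^ 2 ∧ 0 < -r / 5 := by
  have level_bound (ps : ℂ × (Fin 5 → ℂ)) (h : (∑ i, ‖ps.2 i‖ ^ 2) - 5 * ‖ps.1‖ ^ 2 = r) :
      -r / 5 ≤ ‖ps.1‖ ^ 2 := by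
    have : 0 ≤ ∑ i, ‖ps.2 i‖ ^ 2 := by positivity
    linarith
  refine ⟨Set.ext fun ps => ⟨?_, ?_⟩, fun ps ⟨_, _, hlevel⟩ => ⟨level_bound ps hlevel, by linarith⟩⟩
  · rintro ⟨-, hcrit, hlevel⟩
    have hp : ps.1 ≠ 0 := by
      rintro h0
      have := level_bound ps hlevel
      rw [h0, norm_zero] at this
      linarith
    exact ⟨fun i => (mul_eq_zero.mp (hcrit i)).resolve_left hp, by linarith⟩
  · rintro ⟨hcrit, hlevel⟩
    exact ⟨hG.eval_eq_zero_of_forall_eval_pderiv_eq_zero (by norm_num) hcrit,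
      fun i => by rw [hcrit i, mul_zero], by linarith⟩
end
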